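/- Let Ω ⊆ ℝⁿ be an open convex cone, α ≠ 0, and let Φ : Ω → ℝ be C³ with positive definite Hessian which is logarithmically homogeneous: Φ(λx) = Φ(x) + 2(n/α) log λ for all λ > 0 and x ∈ Ω. Then the Riemann curvature tensor of the Hessian metric h = D²Φ contracted twice with the position vector vanishes: for every x ∈ Ω and all indices i, j, Σ_{k,l} R_{ikjl}(x) x^k x^l = 0, where R_{ikjl} := ¼ Σ_{a,m} Φ^{am} (Φ_{ila} Φ_{mkj} − Φ_{ija} Φ_{mkl}). -/

import Mathlib

noncomputable section
open scoped BigOperators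
open Filter MeasureTheory

/-- Partial derivative `∂_i f`. -/
def pd {n : ℕ} (f : (Fin n → ℝ) → ℝ) (i : Fin n) : (Fin n → ℝ) → ℝ :=
  fun x => fderiv ℝ f x (Pi.single i 1)

/-- Second partial derivative `f_{ij}`. -/
def pd2 {n : ℕ} (f : (Fin n → ℝ) → ℝ) (i j : Fin n) : (Fin n → ℝ) → ℝ :=
  pd (pd f i) j

/-- Third partial derivative `f_{ijk}`. -/
def pd3 {n : ℕ} (f : (Fin n → ℝ) → ℝ) (i j k : Fin n) : (Fin n → ℝ) → ℝ :=
  pd (pd2 f i j) k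

/-- Fourth partial derivative `f_{ijkl}`. -/
def pd4 {n : ℕ} (f : (Fin n → ℝ) → ℝ) (i j k l : Fin n) : (Fin n → ℝ) → ℝ :=
  pd (pd3 f i j k) l

/-- Fifth partial derivative. -/
def pd5 {n : ℕ} (f : (Fin n → ℝ) → ℝ) (i j k l m : Fin n) : (Fin n → ℝ) → ℝ :=
  pd (pd4 f i j k l) m

/-- The Hessian matrix `D²Φ(x)`, with entries `Φ_{ij}(x)`. -/
def hess {n : ℕ} (Φ : (Fin n → ℝ) → ℝ) (x : Fin n → ℝ) : Matrix (Fin n) (Fin n) ℝ :=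
  Matrix.of fun i j => pd2 Φ i j x

/-- The inverse Hessian matrix, with entries `Φ^{ij}(x)`. -/
def ihess {n : ℕ} (Φ : (Fin n → ℝ) → ℝ) (x : Fin n → ℝ) : Matrix (Fin n) (Fin n) ℝ :=
  (hess Φ x)⁻¹

/-- The gradient `∇Φ(x)`. -/
def grad {n : ℕ} (Φ : (Fin n → ℝ) → ℝ) (x : Fin n → ℝ) : Fin n → ℝ :=
  fun i => pd Φ i x

/-- The Calabi tensor `g_{ij} = Σ Φ_{iab} Φ_{jcd} Φ^{ac} Φ^{bd}`. -/
def calabi {n : ℕ} (Φ : (Fin n → ℝ) → ℝ) (i j : Fin n) (x : Fin n → ℝ) : ℝ :=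
  ∑ a, ∑ b, ∑ c, ∑ d,
    pd3 Φ i a b x * pd3 Φ j c d x * ihess Φ x a c * ihess Φ x b d

/-- `W^i := (∂_i W)(∇Φ)`. -/
def Wop {n : ℕ} (Φ W : (Fin n → ℝ) → ℝ) (i : Fin n) (x : Fin n → ℝ) : ℝ :=
  pd W i (grad Φ x)

/-- `Ŵ_{ij} := Σ_{a,b} W^{ab} Φ_{ai} Φ_{bj}` where `W^{ab} = (∂²_{ab}W)(∇Φ)`. -/
def What2 {n : ℕ} (Φ W : (Fin n → ℝ) → ℝ) (i j : Fin n) (x : Fin n → ℝ) : ℝ :=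
  ∑ a, ∑ b, pd2 W a b (grad Φ x) * pd2 Φ a i x * pd2 Φ b j x

/-- `Ŵ_{ijk} := Σ_{a,b,c} W^{abc} Φ_{ai} Φ_{bj} Φ_{ck}` where `W^{abc} = (∂³_{abc}W)(∇Φ)`. -/
def What3 {n : ℕ} (Φ W : (Fin n → ℝ) → ℝ) (i j k : Fin n) (x : Fin n → ℝ) : ℝ :=
  ∑ a, ∑ b, ∑ c, pd3 W a b c (grad Φ x) * pd2 Φ a i x * pd2 Φ b j x * pd2 Φ c k x

/-- Christoffel symbols `Γ^k_{pq} = ½ Σ_m Φ^{km} Φ_{mpq}` of the Hessian metric. -/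
def Γh {n : ℕ} (Φ : (Fin n → ℝ) → ℝ) (k p q : Fin n) (x : Fin n → ℝ) : ℝ :=
  (1/2) * ∑ m, ihess Φ x k m * pd3 Φ m p q x

/-- Covariant derivative of a (0,1)-tensor: `(∇T)_{p i}`. -/
def covD1 {n : ℕ} (Φ : (Fin n → ℝ) → ℝ) (T : Fin n → (Fin n → ℝ) → ℝ)
    (p i : Fin n) (x : Fin n → ℝ) : ℝ :=
  pd (T i) p x - ∑ m, Γh Φ m p i x * T m x

/-- Covariant derivative of a (0,2)-tensor: `(∇T)_{p i j}`. -/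
def covD2 {n : ℕ} (Φ : (Fin n → ℝ) → ℝ) (T : Fin n → Fin n → (Fin n → ℝ) → ℝ)
    (p i j : Fin n) (x : Fin n → ℝ) : ℝ :=
  pd (T i j) p x - ∑ m, Γh Φ m p i x * T m j x - ∑ m, Γh Φ m p j x * T i m x

/-- Covariant derivative of a (0,3)-tensor: `(∇T)_{p i j k}`. -/
def covD3 {n : ℕ} (Φ : (Fin n → ℝ) → ℝ) (T : Fin n → Fin n → Fin n → (Fin n → ℝ) → ℝ)
    (p i j k : Fin n) (x : Fin n → ℝ) : ℝ :=
  pd (T i j k) p x - ∑ m, Γh Φ m p i x * T m j k x - ∑ m, Γh Φ m p j x * T i m k x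
    - ∑ m, Γh Φ m p k x * T i j m x

/-- Covariant derivative of a (0,4)-tensor: `(∇T)_{p i j k l}`. -/
def covD4 {n : ℕ} (Φ : (Fin n → ℝ) → ℝ)
    (T : Fin n → Fin n → Fin n → Fin n → (Fin n → ℝ) → ℝ)
    (p i j k l : Fin n) (x : Fin n → ℝ) : ℝ :=
  pd (T i j k l) p x - ∑ m, Γh Φ m p i x * T m j k l x - ∑ m, Γh Φ m p j x * T i m k l x
    - ∑ m, Γh Φ m p k x * T i j m l x - ∑ m, Γh Φ m p l x * T i j k m x

/-- Weighted tensor Laplacian of a (0,1)-tensor: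
`(LT)_i = Σ Φ^{pq}(∇∇T)_{pq i} − ½ Σ_p (Σ_m Φ^{pm} V_m + W^p)(∇T)_{p i}`. -/
def LT1 {n : ℕ} (Φ V W : (Fin n → ℝ) → ℝ) (T : Fin n → (Fin n → ℝ) → ℝ)
    (i : Fin n) (x : Fin n → ℝ) : ℝ :=
  (∑ p, ∑ q, ihess Φ x p q * covD2 Φ (covD1 Φ T) p q i x)
    - (1/2) * ∑ p, ((∑ m, ihess Φ x p m * pd V m x) + Wop Φ W p x) * covD1 Φ T p i x

/-- Weighted tensor Laplacian of a (0,2)-tensor. -/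
def LT2 {n : ℕ} (Φ V W : (Fin n → ℝ) → ℝ) (T : Fin n → Fin n → (Fin n → ℝ) → ℝ)
    (i j : Fin n) (x : Fin n → ℝ) : ℝ :=
  (∑ p, ∑ q, ihess Φ x p q * covD3 Φ (covD2 Φ T) p q i j x)
    - (1/2) * ∑ p, ((∑ m, ihess Φ x p m * pd V m x) + Wop Φ W p x) * covD2 Φ T p i j x

/-- Weighted tensor Laplacian of a (0,3)-tensor. -/
def LT3 {n : ℕ} (Φ V W : (Fin n → ℝ) → ℝ) (T : Fin n → Fin n → Fin n → (Fin n → ℝ) → ℝ)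
    (i j k : Fin n) (x : Fin n → ℝ) : ℝ :=
  (∑ p, ∑ q, ihess Φ x p q * covD4 Φ (covD3 Φ T) p q i j k x)
    - (1/2) * ∑ p, ((∑ m, ihess Φ x p m * pd V m x) + Wop Φ W p x) * covD3 Φ T p i j k x

/-- `N_{piab} := Φ_{piab} − ½ Σ_{k,m} Φ^{km}(Φ_{mpi}Φ_{kab} + Φ_{mpa}Φ_{kib} + Φ_{mpb}Φ_{kia})`. -/
def Ncal {n : ℕ} (Φ : (Fin n → ℝ) → ℝ) (p i a b : Fin n) (x : Fin n → ℝ) : ℝ :=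
  pd4 Φ p i a b x - (1/2) * ∑ k, ∑ m, ihess Φ x k m *
    (pd3 Φ m p i x * pd3 Φ k a b x + pd3 Φ m p a x * pd3 Φ k i b x
      + pd3 Φ m p b x * pd3 Φ k i a x)

/-- Riemann curvature `R_{ikjl} := ¼ Σ_{a,m} Φ^{am}(Φ_{ila}Φ_{mkj} − Φ_{ija}Φ_{mkl})`. -/
def Rcal {n : ℕ} (Φ : (Fin n → ℝ) → ℝ) (i k j l : Fin n) (x : Fin n → ℝ) : ℝ :=
  (1/4) * ∑ a, ∑ m, ihess Φ x a m *
    (pd3 Φ i l a x * pd3 Φ m k j x - pd3 Φ i j a x * pd3 Φ m k l x)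

/-- The `h`-norm of a quadratic form `Q` at `x`:
`‖Q‖_h(x) = sup { Σ Q_{ij} v_i v_j : Σ Φ_{ij}(x) v_i v_j = 1 }`. -/
def hnorm {n : ℕ} (Φ : (Fin n → ℝ) → ℝ) (Q : Fin n → Fin n → ℝ) (x : Fin n → ℝ) : ℝ :=
  sSup {r | ∃ v : Fin n → ℝ,
    (∑ i, ∑ j, pd2 Φ i j x * v i * v j) = 1 ∧ r = ∑ i, ∑ j, Q i j * v i * v j}

/-- The matrix `A(x)` with entries `V_{ab} + Ŵ_{ab}`. -/
def Amat {n : ℕ} (Φ V W : (Fin n → ℝ) → ℝ) (x : Fin n → ℝ) : Matrix (Fin n) (Fin n) ℝ :=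
  Matrix.of fun a b => pd2 V a b x + What2 Φ W a b x

/-- The matrix `S_i(x)` with entries `V_{iab} − Ŵ_{iab}`. -/
def Smat {n : ℕ} (Φ V W : (Fin n → ℝ) → ℝ) (i : Fin n) (x : Fin n → ℝ) :
    Matrix (Fin n) (Fin n) ℝ :=
  Matrix.of fun a b => pd3 V i a b x - What3 Φ W i a b x

/-- `H_{ij}(x) := Tr[A(x)⁻¹ · S_i(x) · (D²Φ(x))⁻¹ · S_j(x)]`. -/
def Hten {n : ℕ} (Φ V W : (Fin n → ℝ) → ℝ) (i j : Fin n) (x : Fin n → ℝ) : ℝ :=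
  ((Amat Φ V W x)⁻¹ * Smat Φ V W i x * (hess Φ x)⁻¹ * Smat Φ V W j x).trace

/-- Euclidean operator norm of a matrix. -/
def eOpNorm {n : ℕ} (M : Matrix (Fin n) (Fin n) ℝ) : ℝ :=
  ‖LinearMap.toContinuousLinearMap (Matrix.toEuclideanLin M)‖

/-- Directional derivative of the Hessian: the matrix `∂_e D²F(x)`. -/
def dirHess {n : ℕ} (F : (Fin n → ℝ) → ℝ) (e : Fin n → ℝ) (x : Fin n → ℝ) :
    Matrix (Fin n) (Fin n) ℝ :=
  Matrix.of fun i j => ∑ k, e k * pd3 F k i j x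

/-- The quadratic form `⟨Qy, y⟩`. -/
def qform {n : ℕ} (Q : Matrix (Fin n) (Fin n) ℝ) (y : Fin n → ℝ) : ℝ :=
  ∑ i, ∑ j, Q i j * y j * y i

/-!
Log-homogeneity makes `∂_p Φ` homogeneous of degree `-1` and `Φ_{pq}` homogeneous of degree `-2`,
so Euler's identity gives `Σ_l Φ_{pql} x^l = -2 Φ_{pq}` (in every slot, by symmetry of third
derivatives). Contracting `R_{ikjl}` with `x^k x^l` therefore replaces each third derivative by
a Hessian entry: the first term becomes `4 Φ_{ia} Φ^{am} Φ_{mj} = 4 Φ_{ij}` and the second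
`-2 Φ_{ija} Φ^{am} Φ_{mk} x^k = -2 Φ_{ija} x^a = 4 Φ_{ij}`, so they cancel.
-/

open Topology Matrix

section Calculus

variable {n : ℕ} {f : (Fin n → ℝ) → ℝ} {x : Fin n → ℝ}

theorem ContDiffAt.pd {m k : WithTop ℕ∞} (hf : ContDiffAt ℝ k f x) (hmk : m + 1 ≤ k)
    (i : Fin n) : ContDiffAt ℝ m (pd f i) x :=
  (hf.fderiv_right hmk).clm_apply contDiffAt_const

theorem pd2_comm (hf : ContDiffAt ℝ 2 f x) (a b : Fin n) : pd2 f a b x = pd2 f b a x := by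
  have hd : DifferentiableAt ℝ (fderiv ℝ f) x :=
    (hf.fderiv_right le_rfl).differentiableAt one_ne_zero
  have hpd2 : ∀ a b : Fin n,
      pd2 f a b x = fderiv ℝ (fderiv ℝ f) x (Pi.single b 1) (Pi.single a 1) := fun a b => by
    change fderiv ℝ (fun z => fderiv ℝ f z (Pi.single a 1)) x (Pi.single b 1) = _
    simp [fderiv_clm_apply hd (differentiableAt_const _)]
  rw [hpd2, hpd2, hf.isSymmSndFDerivAt (by simp)]

theorem fderiv_apply_eq_sum_pd_mul (x v : Fin n → ℝ) :
    fderiv ℝ f x v = ∑ l, pd f l x * v l := by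
  conv_lhs => rw [pi_eq_sum_univ' v]
  simp [pd, mul_comm]

theorem mul_pd_smul_eq (hfx : DifferentiableAt ℝ f x) {t c d : ℝ}
    (hftx : DifferentiableAt ℝ f (t • x))
    (h : (fun y => f (t • y)) =ᶠ[𝓝 x] fun y => c * f y + d) (i : Fin n) :
    t * pd f i (t • x) = c * pd f i x := by
  have hcomp : HasFDerivAt (fun y => f (t • y))
      ((fderiv ℝ f (t • x)).comp (t • ContinuousLinearMap.id ℝ (Fin n → ℝ))) x :=
    hftx.hasFDerivAt.comp x ((ContinuousLinearMap.id ℝ _).hasFDerivAt.const_smul t)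
  have hlin : HasFDerivAt (fun y => c * f y + d) (c • fderiv ℝ f x) x :=
    (hfx.hasFDerivAt.const_mul c).add_const d
  have := congrArg (· (Pi.single i 1)) ((hcomp.congr_of_eventuallyEq h.symm).unique hlin)
  simpa [pd, mul_comm] using this

theorem pd_smul_of_smul {Ω : Set (Fin n → ℝ)} (hΩ : IsOpen Ω)
    (hcone : ∀ y ∈ Ω, ∀ t : ℝ, 0 < t → t • y ∈ Ω) (hf : DifferentiableOn ℝ f Ω) {r : ℤ}
    {g : ℝ → ℝ} (h : ∀ y ∈ Ω, ∀ t : ℝ, 0 < t → f (t • y) = t ^ r * f y + g t) (i : Fin n) :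
    ∀ y ∈ Ω, ∀ t : ℝ, 0 < t → pd f i (t • y) = t ^ (r - 1) * pd f i y := by
  intro y hy t ht
  have hscale := mul_pd_smul_eq (hf.differentiableAt (hΩ.mem_nhds hy))
    (hf.differentiableAt (hΩ.mem_nhds (hcone y hy t ht)))
    (eventually_of_mem (hΩ.mem_nhds hy) fun z hz => h z hz t ht) i
  rw [zpow_sub_one₀ ht.ne', mul_right_comm, ← hscale, mul_comm t, mul_inv_cancel_right₀ ht.ne']

theorem sum_pd_mul_self_eq_of_smul (hf : DifferentiableAt ℝ f x) {r : ℤ}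
    (h : ∀ t : ℝ, 0 < t → f (t • x) = t ^ r * f x) : ∑ l, pd f l x * x l = r * f x := by
  have hray : HasDerivAt (fun t : ℝ => t • x) x 1 := by
    simpa using (hasDerivAt_id (1 : ℝ)).smul_const x
  have hcomp : HasDerivAt (fun t : ℝ => f (t • x)) (fderiv ℝ f x x) 1 :=
    hf.hasFDerivAt.comp_hasDerivAt_of_eq 1 hray (one_smul ℝ x).symm
  have hpow : HasDerivAt (fun t : ℝ => t ^ r * f x) (r * f x) 1 := by
    simpa using (hasDerivAt_zpow r (1 : ℝ) (Or.inl one_ne_zero)).mul_const (f x)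
  have heq : (fun t : ℝ => f (t • x)) =ᶠ[𝓝 1] fun t => t ^ r * f x :=
    eventually_of_mem (Ioi_mem_nhds one_pos) h
  rw [← fderiv_apply_eq_sum_pd_mul]
  exact hcomp.unique (hpow.congr_of_eventuallyEq heq)

end Calculus

theorem sum_sum_curvature_mul_mul_eq_zero {R : Type*} [CommRing R] {n : ℕ}
    (H A : Matrix (Fin n) (Fin n) R) (hA : A * H = 1)
    (T : Fin n → Fin n → Fin n → R) (x : Fin n → R)
    (hT : ∀ p a b, T p a b = T p b a) (hEuler : ∀ p q, ∑ l, T p q l * x l = -2 * H p q)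
    (i j : Fin n) :
    ∑ k, ∑ l, (∑ a, ∑ m, A a m * (T i l a * T m k j - T i j a * T m k l)) * x k * x l = 0 := by
  have hEuler_mid : ∀ p q, ∑ l, T p l q * x l = -2 * H p q := fun p q => by
    simp only [hT p _ q, hEuler]
  have hEuler_sq : ∀ m, ∑ k, ∑ l, T m k l * x l * x k = -2 * ∑ k, H m k * x k := fun m => by
    simp only [← Finset.sum_mul, hEuler]
    simp only [Finset.mul_sum, mul_assoc]
  have hinner : ∀ a m, ∑ k, ∑ l, A a m * (T i l a * T m k j - T i j a * T m k l) * x k * x l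
      = 4 * (H i a * A a m * H m j) + 2 * (T i j a * A a m * ∑ k, H m k * x k) := fun a m => by
    calc _ = A a m * ((∑ k, T m k j * x k) * (∑ l, T i l a * x l)
            - T i j a * ∑ k, ∑ l, T m k l * x l * x k) := by
          rw [Finset.sum_mul_sum, Finset.mul_sum, ← Finset.sum_sub_distrib, Finset.mul_sum]
          refine Finset.sum_congr rfl fun k _ => ?_
          rw [Finset.mul_sum, ← Finset.sum_sub_distrib, Finset.mul_sum]
          exact Finset.sum_congr rfl fun l _ => by ring
      _ = _ := by rw [hEuler_mid, hEuler_mid, hEuler_sq]; ring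
  have hHAH : ∑ a, ∑ m, H i a * A a m * H m j = H i j := by
    have : (H * A * H) i j = H i j := by rw [Matrix.mul_assoc, hA, Matrix.mul_one]
    rw [Finset.sum_comm]
    simpa only [Matrix.mul_apply, Finset.sum_mul] using this
  have hAHx : ∑ a, ∑ m, T i j a * A a m * ∑ k, H m k * x k = ∑ a, T i j a * x a := by
    have : T i j ⬝ᵥ (A *ᵥ (H *ᵥ x)) = T i j ⬝ᵥ x := by rw [mulVec_mulVec, hA, one_mulVec]
    simpa only [dotProduct, mulVec, Finset.mul_sum, mul_assoc] using this
  calc _ = ∑ a, ∑ m, ∑ k, ∑ l, A a m * (T i l a * T m k j - T i j a * T m k l) * x k * x l := by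
        simp only [Finset.sum_mul]
        rw [Finset.sum_comm_cycle]
        exact Finset.sum_congr rfl fun a _ => Finset.sum_comm_cycle
    _ = 4 * H i j + 2 * ∑ a, T i j a * x a := by
        simp only [hinner, Finset.sum_add_distrib, ← Finset.mul_sum, hHAH, hAHx]
    _ = 0 := by rw [hEuler]; ring

theorem stmt_11_general {n : ℕ} (Ω : Set (Fin n → ℝ)) (hΩ : IsOpen Ω)
    (hcone : ∀ x ∈ Ω, ∀ t : ℝ, 0 < t → t • x ∈ Ω)
    (α : ℝ) (Φ : (Fin n → ℝ) → ℝ)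
    (hΦ : ContDiffOn ℝ 3 Φ Ω)
    (hpos : ∀ x ∈ Ω, (hess Φ x).PosDef)
    (hhom : ∀ x ∈ Ω, ∀ t : ℝ, 0 < t →
      Φ (t • x) = Φ x + 2 * ((n : ℝ) / α) * Real.log t) :
    ∀ x ∈ Ω, ∀ i j : Fin n,
      ∑ k, ∑ l, Rcal Φ i k j l x * x k * x l = 0 := by
  intro x hx i j
  have hC3 : ∀ y ∈ Ω, ContDiffAt ℝ 3 Φ y := fun y hy => hΦ.contDiffAt (hΩ.mem_nhds hy)
  have hpd : ∀ p, ∀ y ∈ Ω, ∀ t : ℝ, 0 < t → pd Φ p (t • y) = t ^ (-1 : ℤ) * pd Φ p y :=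
    pd_smul_of_smul (r := 0) hΩ hcone (hΦ.differentiableOn (by norm_num)) (by simpa using hhom)
  have hdpd : ∀ p, DifferentiableOn ℝ (pd Φ p) Ω := fun p y hy =>
    (((hC3 y hy).pd (m := 2) (by norm_num) p).differentiableAt two_ne_zero).differentiableWithinAt
  have hpd2 : ∀ p q, ∀ y ∈ Ω, ∀ t : ℝ, 0 < t →
      pd2 Φ p q (t • y) = t ^ (-2 : ℤ) * pd2 Φ p q y := fun p => by
    simpa [pd2] using pd_smul_of_smul (r := -1) (g := 0) hΩ hcone (hdpd p) (by simpa using hpd p)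
  have hEuler : ∀ p q, ∑ l, pd3 Φ p q l x * x l = -2 * hess Φ x p q := fun p q => by
    have hC1 := ((hC3 x hx).pd (m := 2) (by norm_num) p).pd (m := 1) (by norm_num) q
    simpa [pd3, pd2, hess] using
      sum_pd_mul_self_eq_of_smul (hC1.differentiableAt one_ne_zero) (hpd2 p q x hx)
  have hsym : ∀ p a b, pd3 Φ p a b x = pd3 Φ p b a x := fun p =>
    pd2_comm ((hC3 x hx).pd (by norm_num) p)
  have hinv : ihess Φ x * hess Φ x = 1 :=
    nonsing_inv_mul _ (hpos x hx).det_pos.ne'.isUnit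
  have hcontr := sum_sum_curvature_mul_mul_eq_zero _ _ hinv _ x hsym hEuler i j
  simp only [Rcal, mul_assoc, ← Finset.mul_sum] at hcontr ⊢
  rw [hcontr, mul_zero]

/-- for logarithmically homogeneous `Φ` on a cone, the Riemann tensor of the
Hessian metric contracted twice with the position vector vanishes: `Σ R_{ikjl} x^k x^l = 0`. -/
theorem stmt_11 {n : ℕ} (Ω : Set (Fin n → ℝ)) (hΩ : IsOpen Ω) (hΩconv : Convex ℝ Ω)
    (hcone : ∀ x ∈ Ω, ∀ t : ℝ, 0 < t → t • x ∈ Ω)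
    (α : ℝ) (hα : α ≠ 0) (Φ : (Fin n → ℝ) → ℝ)
    (hΦ : ContDiffOn ℝ 3 Φ Ω)
    (hpos : ∀ x ∈ Ω, (hess Φ x).PosDef)
    (hhom : ∀ x ∈ Ω, ∀ t : ℝ, 0 < t →
      Φ (t • x) = Φ x + 2 * ((n : ℝ) / α) * Real.log t) :
    ∀ x ∈ Ω, ∀ i j : Fin n,
      ∑ k, ∑ l, Rcal Φ i k j l x * x k * x l = 0 :=
  stmt_11_general Ω hΩ hcone α Φ hΦ hpos hhom
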